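/- With the setup of the previous statement, there is an absolute constant C₀ such that for u ≥ 2, P(sup_n ξ(n) > u) ≤ exp(-u²/2 + C₀). -/

import Mathlib

open MeasureTheory ProbabilityTheory Real

/-!
Union bound: the event `sup_{n ≥ 1} ξ(n) > u` is covered by the events
`ε(n) > u √(log a_n)` with `a_n = n + e - 1 ≥ max n e`. Since `log a_n ≥ 1`, for `u ≥ 2` each of
them has probability `exp (-u² log a_n / 2) ≤ exp (-u²/2 - 2 (log a_n - 1)) ≤ e² exp (-u²/2) / n²`,
and summing gives `e² (π²/6) exp (-u²/2) ≤ exp (-u²/2 + 3)`.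
-/

lemma exists_mem_lt_of_lt_biSup {ι : Type*} [Nonempty ι] {s : Set ι} {f : ι → ℝ} {u : ℝ}
    (hu : 0 ≤ u) (h : u < ⨆ i ∈ s, f i) : ∃ i ∈ s, u < f i := by
  obtain ⟨i, hi⟩ := exists_lt_of_lt_ciSup h
  by_cases his : i ∈ s
  · exact ⟨i, his, by rwa [ciSup_pos his] at hi⟩
  · -- for `i ∉ s` the inner supremum is over an empty type, hence the junk value `0`
    have : IsEmpty (i ∈ s) := ⟨his⟩
    rw [Real.iSup_of_isEmpty] at hi
    exact absurd hi hu.not_gt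

lemma exp_neg_sq_mul_log_div_two_le {u a : ℝ} (hu : 2 ≤ u) (ha : exp 1 ≤ a) :
    exp (-(u ^ 2 * log a) / 2) ≤ exp 2 * exp (-(u ^ 2) / 2) / a ^ 2 := by
  have ha0 : 0 < a := (exp_pos 1).trans_le ha
  have hlog : 1 ≤ log a := (le_log_iff_exp_le ha0).mpr ha
  have hrhs : exp 2 * exp (-(u ^ 2) / 2) / a ^ 2 = exp (2 + -(u ^ 2) / 2 - (log a + log a)) := by
    rw [exp_sub, exp_add, exp_add, exp_log ha0, sq a]
  rw [hrhs, exp_le_exp]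
  nlinarith [mul_nonneg (by nlinarith : (0 : ℝ) ≤ u ^ 2 - 4) (sub_nonneg.mpr hlog)]

lemma measure_lt_div_sqrt_log_le {Ω : Type*} [MeasurableSpace Ω] {μ : Measure Ω} {X : Ω → ℝ}
    (htail : ∀ x : ℝ, 0 ≤ x → μ {ω | x < |X ω|} ≤ ENNReal.ofReal (exp (-(x ^ 2) / 2)))
    {u a : ℝ} (hu : 2 ≤ u) (ha : exp 1 ≤ a) :
    μ {ω | u < X ω / √(log a)} ≤ ENNReal.ofReal (exp 2 * exp (-(u ^ 2) / 2) / a ^ 2) := by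
  have hlog : 0 < log a := log_pos (by linarith [exp_one_gt_d9])
  have hs : 0 < √(log a) := sqrt_pos.mpr hlog
  calc μ {ω | u < X ω / √(log a)} ≤ μ {ω | u * √(log a) < |X ω|} :=
        measure_mono fun ω hω => ((lt_div_iff₀ hs).mp hω).trans_le (le_abs_self _)
    _ ≤ ENNReal.ofReal (exp (-((u * √(log a)) ^ 2) / 2)) := htail _ (by positivity)
    _ ≤ _ := by
      rw [mul_pow, sq_sqrt hlog.le]
      exact ENNReal.ofReal_le_ofReal (exp_neg_sq_mul_log_div_two_le hu ha)

lemma hasSum_one_div_nat_add_one_sq :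
    HasSum (fun k : ℕ => 1 / ((k : ℝ) + 1) ^ 2) (π ^ 2 / 6) := by
  simpa using (hasSum_nat_add_iff' 1).mpr hasSum_zeta_two

lemma pi_sq_div_six_le_exp_one : π ^ 2 / 6 ≤ exp 1 := by
  nlinarith [pi_lt_d2, pi_pos, exp_one_gt_d9]

theorem talagrand_example_sup_tail_general {Ω : Type*} [MeasurableSpace Ω]
    (μ : Measure Ω) (ε : ℕ → Ω → ℝ)
    (htail : ∀ n, ∀ x : ℝ, 0 ≤ x →
      μ {ω | x < |ε n ω|} = ENNReal.ofReal (Real.exp (-(x ^ 2) / 2)))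
    (ξ : ℕ → Ω → ℝ)
    (hξ : ∀ n ω, ξ n ω = ε n ω / Real.sqrt (Real.log ((n : ℝ) + Real.exp 1 - 1))) :
    ∃ C₀ : ℝ, ∀ u : ℝ, 2 ≤ u →
      μ {ω | u < ⨆ n ∈ {n : ℕ | 1 ≤ n}, ξ n ω}
        ≤ ENNReal.ofReal (Real.exp (-(u ^ 2) / 2 + C₀)) := by
  refine ⟨3, fun u hu => ?_⟩
  set c := exp 2 * exp (-(u ^ 2) / 2)
  have hcover : {ω | u < ⨆ n ∈ {n : ℕ | 1 ≤ n}, ξ n ω} ⊆ ⋃ k : ℕ, {ω | u < ξ (k + 1) ω} := by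
    intro ω hω
    obtain ⟨n, hn, hlt⟩ := exists_mem_lt_of_lt_biSup (by linarith) hω
    obtain ⟨k, rfl⟩ := Nat.exists_eq_add_of_le' hn
    exact Set.mem_iUnion.mpr ⟨k, hlt⟩
  have hterm (k : ℕ) :
      μ {ω | u < ξ (k + 1) ω} ≤ ENNReal.ofReal (c * (1 / ((k : ℝ) + 1) ^ 2)) := by
    have hk : (k : ℝ) + 1 ≤ ((k + 1 : ℕ) : ℝ) + exp 1 - 1 := by push_cast; linarith [exp_one_gt_d9]
    simp_rw [hξ]
    refine (measure_lt_div_sqrt_log_le (fun x hx => (htail _ x hx).le) hu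
      (by push_cast; linarith [k.cast_nonneg (α := ℝ)])).trans (ENNReal.ofReal_le_ofReal ?_)
    rw [mul_one_div]
    gcongr
  have hsum := hasSum_one_div_nat_add_one_sq
  calc μ {ω | u < ⨆ n ∈ {n : ℕ | 1 ≤ n}, ξ n ω}
      ≤ ∑' k : ℕ, μ {ω | u < ξ (k + 1) ω} := (measure_mono hcover).trans (measure_iUnion_le _)
    _ ≤ ∑' k : ℕ, ENNReal.ofReal (c * (1 / ((k : ℝ) + 1) ^ 2)) := ENNReal.tsum_le_tsum hterm
    _ = ENNReal.ofReal (c * (π ^ 2 / 6)) := by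
      rw [← ENNReal.ofReal_tsum_of_nonneg (fun k => by positivity) (hsum.summable.mul_left c),
        tsum_mul_left, hsum.tsum_eq]
    _ ≤ ENNReal.ofReal (exp (-(u ^ 2) / 2 + 3)) := by
      rw [show exp (-(u ^ 2) / 2 + 3) = c * exp 1 by
        simp only [c, ← exp_add]; ring_nf]
      gcongr
      exact pi_sq_div_six_le_exp_one

theorem talagrand_example_sup_tail {Ω : Type*} [MeasurableSpace Ω]
    (μ : Measure Ω) [IsProbabilityMeasure μ] (ε : ℕ → Ω → ℝ)
    (hmeas : ∀ n, Measurable (ε n))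
    (hindep : iIndepFun ε μ)
    (hsymm : ∀ n, ∀ x : ℝ, μ {ω | x < ε n ω} = μ {ω | ε n ω < -x})
    (htail : ∀ n, ∀ x : ℝ, 0 ≤ x →
      μ {ω | x < |ε n ω|} = ENNReal.ofReal (Real.exp (-(x ^ 2) / 2)))
    (ξ : ℕ → Ω → ℝ)
    (hξ : ∀ n ω, ξ n ω = ε n ω / Real.sqrt (Real.log ((n : ℝ) + Real.exp 1 - 1))) :
    ∃ C₀ : ℝ, ∀ u : ℝ, 2 ≤ u →
      μ {ω | u < ⨆ n ∈ {n : ℕ | 1 ≤ n}, ξ n ω}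
        ≤ ENNReal.ofReal (Real.exp (-(u ^ 2) / 2 + C₀)) :=
  talagrand_example_sup_tail_general μ ε htail ξ hξ
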